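/- Let p, q, μ > 0 and let H + M act on pairs of one-variable polynomials by (H+M)(f,g) = (f'' - (y/2)f' + (q/p) g, μ g'' - (y/2) g' + (p/q) f). Then for every n ∈ ℕ, the pair (f̃_n, g̃_n) with leading terms (q y^n, -p y^n) defined by f̃_n = q(h_n + ((n(n-1)(1-μ))/3) h_{n-2} + lower order), g̃_n = -p(ĥ_n - ((n(n-1)(1-μ))/3) ĥ_{n-2} + lower order) can be chosen so that (H+M)(f̃_n, g̃_n) = -(1 + n/2)(f̃_n, g̃_n); in particular for n = 0 the pair (q, -p) satisfies (H+M)(q,-p) = -(q,-p). -/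

import Mathlib

/-!
Comparing coefficients of `y ^ m`, the eigenvalue equation with `λ = -(1 + n/2)` says that the
pair of `m`-th coefficients, multiplied by `[[λ + m/2, -q/p], [-p/q, λ + m/2]]`, equals the
pair of `(m + 2)`-th coefficients scaled by `(m + 2)(m + 1)` and `μ (m + 2)(m + 1)`. The
determinant `(λ + m/2)² - 1` vanishes for `m ≤ n` only at `m = n`, where `(q, -p)` spans the
kernel; below the top degree the coefficients are then determined downwards.
-/

open Polynomial

theorem coeff_sum_range_C_mul_X_pow {R : Type*} [Semiring R] {f : ℕ → R} {n : ℕ}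
    (hf : ∀ m, n < m → f m = 0) (m : ℕ) :
    (∑ k ∈ Finset.range (n + 1), C (f k) * X ^ k).coeff m = f m := by
  by_cases hm : m ≤ n
  · simp [hm]
  · simp [hm, hf m (not_le.1 hm)]

theorem natDegree_sum_range_C_mul_X_pow {R : Type*} [Semiring R] {f : ℕ → R} {n : ℕ}
    (hf : ∀ m, n < m → f m = 0) (hn : f n ≠ 0) :
    (∑ k ∈ Finset.range (n + 1), C (f k) * X ^ k).natDegree = n := by
  refine natDegree_eq_of_le_of_coeff_ne_zero ?_ (by rwa [coeff_sum_range_C_mul_X_pow hf])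
  rw [natDegree_le_iff_coeff_eq_zero]
  intro m hm
  rw [coeff_sum_range_C_mul_X_pow hf, hf m hm]

-- The paper's `L_a = a d²/dy² - (y/2) d/dy`, for `a = 1` and `a = μ`.
noncomputable def ouGenerator (a : ℝ) (F : ℝ[X]) : ℝ[X] :=
  C a * derivative (derivative F) - C (1 / 2 : ℝ) * X * derivative F

theorem coeff_ouGenerator (a : ℝ) (F : ℝ[X]) (m : ℕ) :
    (ouGenerator a F).coeff m
      = a * ((m + 2) * (m + 1)) * F.coeff (m + 2) - m / 2 * F.coeff m := by
  rw [ouGenerator]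
  rcases m with _ | m
  · simp only [coeff_sub, coeff_derivative, mul_assoc, mul_coeff_zero, coeff_C_zero, coeff_X_zero]
    push_cast; ring
  · simp only [coeff_sub, coeff_C_mul, coeff_derivative, mul_assoc, coeff_X_mul]
    push_cast; ring

theorem ouGenerator_add_C_mul_eq_C_mul (a c ev : ℝ) (F G : ℝ[X])
    (h : ∀ m : ℕ, a * ((m + 2) * (m + 1)) * F.coeff (m + 2) - m / 2 * F.coeff m
      + c * G.coeff m = ev * F.coeff m) :
    ouGenerator a F + C c * G = C ev * F := by
  ext m
  rw [coeff_add, coeff_ouGenerator, coeff_C_mul, coeff_C_mul, h]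

noncomputable def solveCoupled (c d r s : ℝ) : ℝ × ℝ :=
  ((d * r + c * s) / (d ^ 2 - 1), (d * s + c⁻¹ * r) / (d ^ 2 - 1))

theorem solveCoupled_spec {c d : ℝ} (r s : ℝ) (hc : c ≠ 0) (hd : d ^ 2 - 1 ≠ 0) :
    d * (solveCoupled c d r s).1 - c * (solveCoupled c d r s).2 = r ∧
      d * (solveCoupled c d r s).2 - c⁻¹ * (solveCoupled c d r s).1 = s := by
  constructor <;> (simp only [solveCoupled]; field_simp; ring)

/- `eigenCoeffs p q μ n j` is the pair of coefficients of `X ^ (n - j)`. The step solves the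
equations at `X ^ m`, `m = n - j - 2`, for which `-(1 + n/2) + m/2 = -(j + 4)/2`. -/
noncomputable def eigenCoeffs (p q μ : ℝ) (n : ℕ) : ℕ → ℝ × ℝ
  | 0 => (q, -p)
  | 1 => 0
  | j + 2 =>
    let k : ℝ := (n - j) * (n - j - 1)
    solveCoupled (q / p) (-(j + 4) / 2)
      (k * (eigenCoeffs p q μ n j).1) (μ * k * (eigenCoeffs p q μ n j).2)

theorem eigenCoeffs_add_two_spec {p q : ℝ} (μ : ℝ) (hp : p ≠ 0) (hq : q ≠ 0) (n j : ℕ) :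
    -(j + 4) / 2 * (eigenCoeffs p q μ n (j + 2)).1 - q / p * (eigenCoeffs p q μ n (j + 2)).2
        = (n - j) * (n - j - 1) * (eigenCoeffs p q μ n j).1 ∧
      -(j + 4) / 2 * (eigenCoeffs p q μ n (j + 2)).2 - p / q * (eigenCoeffs p q μ n (j + 2)).1
        = μ * ((n - j) * (n - j - 1)) * (eigenCoeffs p q μ n j).2 := by
  have hd : (-((j : ℝ) + 4) / 2) ^ 2 - 1 ≠ 0 := by nlinarith [(j.cast_nonneg : (0 : ℝ) ≤ j)]
  simpa only [eigenCoeffs, inv_div, mul_assoc] using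
    solveCoupled_spec ((n - j) * (n - j - 1) * (eigenCoeffs p q μ n j).1)
      (μ * ((n - j) * (n - j - 1)) * (eigenCoeffs p q μ n j).2) (div_ne_zero hq hp) hd

noncomputable def eigenCoeffAt (p q μ : ℝ) (n m : ℕ) : ℝ × ℝ :=
  if m ≤ n then eigenCoeffs p q μ n (n - m) else 0

theorem eigenCoeffAt_self (p q μ : ℝ) (n : ℕ) : eigenCoeffAt p q μ n n = (q, -p) := by
  simp [eigenCoeffAt, eigenCoeffs]

theorem eigenCoeffAt_of_lt (p q μ : ℝ) {n m : ℕ} (h : n < m) : eigenCoeffAt p q μ n m = 0 :=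
  if_neg (not_le.2 h)

theorem eigenCoeffAt_recurrence {p q : ℝ} (μ : ℝ) (hp : p ≠ 0) (hq : q ≠ 0) (n m : ℕ) :
    (-(1 + n / 2) + m / 2) * (eigenCoeffAt p q μ n m).1 - q / p * (eigenCoeffAt p q μ n m).2
        = (m + 2) * (m + 1) * (eigenCoeffAt p q μ n (m + 2)).1 ∧
      (-(1 + n / 2) + m / 2) * (eigenCoeffAt p q μ n m).2 - p / q * (eigenCoeffAt p q μ n m).1
        = μ * ((m + 2) * (m + 1)) * (eigenCoeffAt p q μ n (m + 2)).2 := by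
  by_cases hmn : m ≤ n
  swap
  · simp [eigenCoeffAt, hmn, show ¬ m + 2 ≤ n by omega]
  obtain ⟨j, rfl⟩ := Nat.exists_eq_add_of_le hmn
  rcases j with _ | _ | j
  · simp [eigenCoeffAt, eigenCoeffs, hp, hq]
  · simp [eigenCoeffAt, eigenCoeffs]
  · obtain ⟨h1, h2⟩ := eigenCoeffs_add_two_spec μ hp hq (m + (j + 2)) j
    simp only [eigenCoeffAt, if_pos hmn, Nat.add_sub_cancel_left,
      if_pos (by omega : m + 2 ≤ m + (j + 2)), show m + (j + 2) - (m + 2) = j by omega]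
    push_cast at h1 h2 ⊢
    constructor
    · linear_combination h1
    · linear_combination h2

theorem HM_negative_eigenpairs_general (p q μ : ℝ) (hp : 0 < p) (hq : 0 < q) :
    (∀ n : ℕ, ∃ F G : Polynomial ℝ,
      F.natDegree = n ∧ F.coeff n = q ∧ G.natDegree = n ∧ G.coeff n = -p ∧
      derivative (derivative F) - C (1 / 2 : ℝ) * X * derivative F + C (q / p) * G
        = C (-(1 + (n : ℝ) / 2)) * F ∧
      C μ * derivative (derivative G) - C (1 / 2 : ℝ) * X * derivative G + C (p / q) * F
        = C (-(1 + (n : ℝ) / 2)) * G) ∧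
    ((q / p) * (-p) = -(1 : ℝ) * q ∧ (p / q) * q = -(1 : ℝ) * (-p)) := by
  refine ⟨fun n => ?_, by field_simp, by field_simp⟩
  have hvF : ∀ m, n < m → (eigenCoeffAt p q μ n m).1 = 0 := fun m hm => by
    simp [eigenCoeffAt_of_lt p q μ hm]
  have hvG : ∀ m, n < m → (eigenCoeffAt p q μ n m).2 = 0 := fun m hm => by
    simp [eigenCoeffAt_of_lt p q μ hm]
  have hF := coeff_sum_range_C_mul_X_pow (f := fun m => (eigenCoeffAt p q μ n m).1) hvF
  have hG := coeff_sum_range_C_mul_X_pow (f := fun m => (eigenCoeffAt p q μ n m).2) hvG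
  have hrec := eigenCoeffAt_recurrence μ hp.ne' hq.ne' n
  refine ⟨_, _, natDegree_sum_range_C_mul_X_pow hvF (by simpa [eigenCoeffAt_self] using hq.ne'),
    by simp [hF, eigenCoeffAt_self],
    natDegree_sum_range_C_mul_X_pow hvG (by simpa [eigenCoeffAt_self] using hp.ne'),
    by simp [hG, eigenCoeffAt_self], ?_, ?_⟩
  · rw [← one_mul (derivative (derivative _)), ← C_1]
    exact ouGenerator_add_C_mul_eq_C_mul 1 _ _ _ _
      fun m => by rw [hF, hF, hG]; linear_combination -(hrec m).1
  · exact ouGenerator_add_C_mul_eq_C_mul μ _ _ _ _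
      fun m => by rw [hF, hG, hG]; linear_combination -(hrec m).2

/-- For every `n` there is a pair of degree-`n` polynomials `(f̃_n, g̃_n)` with leading
terms `(q y^n, -p y^n)` which is an eigenvector of
`(H+M)(f,g) = (f'' - (y/2)f' + (q/p)g, μ g'' - (y/2)g' + (p/q)f)` with eigenvalue
`-(1 + n/2)`; in particular, for `n = 0` the constant pair `(q, -p)` satisfies
`(H+M)(q, -p) = -(q, -p)`. -/
theorem HM_negative_eigenpairs (p q μ : ℝ) (hp : 0 < p) (hq : 0 < q) (hμ : 0 < μ) :
    (∀ n : ℕ, ∃ F G : Polynomial ℝ,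
      F.natDegree = n ∧ F.coeff n = q ∧ G.natDegree = n ∧ G.coeff n = -p ∧
      derivative (derivative F) - C (1 / 2 : ℝ) * X * derivative F + C (q / p) * G
        = C (-(1 + (n : ℝ) / 2)) * F ∧
      C μ * derivative (derivative G) - C (1 / 2 : ℝ) * X * derivative G + C (p / q) * F
        = C (-(1 + (n : ℝ) / 2)) * G) ∧
    ((q / p) * (-p) = -(1 : ℝ) * q ∧ (p / q) * q = -(1 : ℝ) * (-p)) :=
  HM_negative_eigenpairs_general p q μ hp hq
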